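/- For every positive integer n with n ≡ 1 (mod 4), t(1,3,16;n) = t(2,2,3;(n-1)/4) and t(1,3,16;n) = 2·N(1,3,16;2n+5). -/
import Mathlib

def tri (x : ℤ) : ℤ := x * (x + 1) / 2

noncomputable def N (a b c n : ℕ) : ℕ :=
  Nat.card {p : ℤ × ℤ × ℤ // (n : ℤ) = a * p.1 ^ 2 + b * p.2.1 ^ 2 + c * p.2.2 ^ 2}

noncomputable def t (a b c n : ℕ) : ℕ :=
  Nat.card {p : ℤ × ℤ × ℤ // (n : ℤ) = a * tri p.1 + b * tri p.2.1 + c * tri p.2.2}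

noncomputable def T (a b c n : ℕ) : ℕ :=
  Nat.card {p : ℕ × ℕ × ℕ // (n : ℤ) = a * tri p.1 + b * tri p.2.1 + c * tri p.2.2}

lemma two_mul_tri (x : ℤ) : 2 * tri x = x * (x + 1) :=
  Int.mul_ediv_cancel' (Int.even_mul_succ_self x).two_dvd

lemma tri_sq (x : ℤ) : (2*x+1)^2 = 8 * tri x + 1 := by
  linear_combination (-4 : ℤ) * two_mul_tri x

lemma zd1 : ∀ a b c : ZMod 8, a^2+3*b^2+16*c^2 = 7 →
    (ZMod.castHom (show (4:ℕ) ∣ 8 by norm_num) (ZMod 4) a = 2 ∧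
     ZMod.castHom (show (2:ℕ) ∣ 8 by norm_num) (ZMod 2) b = 1) := by decide

lemma zd2 : ∀ x t z : ZMod 8,
    ZMod.castHom (show (2:ℕ) ∣ 8 by norm_num) (ZMod 2) x = 1 →
    ZMod.castHom (show (2:ℕ) ∣ 8 by norm_num) (ZMod 2) z = 1 →
    x^2+6*x*t+12*t^2+4*z^2 = 7 →
    ZMod.castHom (show (4:ℕ) ∣ 8 by norm_num) (ZMod 4) (x - t) = 0 := by decide

lemma zc8 {x : ℤ} (h : x % 8 = 7) : (x : ZMod 8) = 7 := by
  have h2 : x ≡ 7 [ZMOD (8:ℕ)] := by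
    show x % ((8:ℕ):ℤ) = 7 % ((8:ℕ):ℤ)
    push_cast; omega
  have := (ZMod.intCast_eq_intCast_iff x 7 8).mpr h2
  simpa using this

lemma zc2 {x : ℤ} (h : x % 2 = 1) : (x : ZMod 2) = 1 := by
  have h2 : x ≡ 1 [ZMOD (2:ℕ)] := by
    show x % ((2:ℕ):ℤ) = 1 % ((2:ℕ):ℤ)
    push_cast; omega
  have := (ZMod.intCast_eq_intCast_iff x 1 2).mpr h2
  simpa using this

lemma zmod4_two {x : ℤ} (h : (x : ZMod 4) = 2) : x % 4 = 2 := by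
  have h2 : (x : ZMod 4) = ((2:ℤ) : ZMod 4) := by simpa using h
  have h3 : x ≡ 2 [ZMOD (4:ℕ)] := (ZMod.intCast_eq_intCast_iff x 2 4).mp h2
  have h4 : x % ((4:ℕ):ℤ) = 2 % ((4:ℕ):ℤ) := h3
  push_cast at h4; omega

lemma zmod2_one {x : ℤ} (h : (x : ZMod 2) = 1) : x % 2 = 1 := by
  have h2 : (x : ZMod 2) = ((1:ℤ) : ZMod 2) := by simpa using h
  have h3 : x ≡ 1 [ZMOD (2:ℕ)] := (ZMod.intCast_eq_intCast_iff x 1 2).mp h2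
  have h4 : x % ((2:ℕ):ℤ) = 1 % ((2:ℕ):ℤ) := h3
  push_cast at h4; omega

lemma key2 {a b c M : ℤ} (hM : M % 8 = 7) (h : M = a^2+3*b^2+16*c^2) :
    a % 4 = 2 ∧ b % 2 = 1 := by
  have h8 : (a : ZMod 8)^2 + 3*(b:ZMod 8)^2 + 16*(c:ZMod 8)^2 = 7 := by
    have h7 := zc8 hM
    rw [h] at h7
    push_cast at h7
    exact h7
  obtain ⟨h4, h2⟩ := zd1 _ _ _ h8
  rw [map_intCast] at h4 h2
  exact ⟨zmod4_two h4, zmod2_one h2⟩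

lemma key1 {x y z M : ℤ} (hx : x % 2 = 1) (hz : z % 2 = 1) (hM : M % 8 = 7)
    (hxy : x % 4 = y % 4) (heq : 4*M = x^2+3*y^2+16*z^2) : 16 ∣ x + 3*y := by
  obtain ⟨s, hs⟩ : ∃ s, y = x + 4*s := ⟨(y-x)/4, by omega⟩
  have hKe : M = x^2+6*x*s+12*s^2+4*z^2 := by
    have h4 : 4*M = 4*(x^2+6*x*s+12*s^2+4*z^2) := by
      rw [hs] at heq; linear_combination heq
    linarith
  have h8 : (x : ZMod 8)^2 + 6*(x:ZMod 8)*(s:ZMod 8) + 12*(s:ZMod 8)^2 + 4*(z:ZMod 8)^2 = 7 := by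
    have h7 := zc8 hM
    rw [hKe] at h7
    push_cast at h7
    exact h7
  have hc := zd2 _ _ _ (by rw [map_intCast]; exact zc2 hx) (by rw [map_intCast]; exact zc2 hz) h8
  have hrw : ((x - s : ℤ) : ZMod 8) = (x:ZMod 8) - (s:ZMod 8) := by push_cast; ring
  rw [← hrw, map_intCast] at hc
  have hdvd : (4:ℤ) ∣ x - s := (ZMod.intCast_zmod_eq_zero_iff_dvd _ 4).mp hc
  omega

/-- forward membership for the first main equiv, congruent case -/
lemma memA1 {n x y z : ℤ} (hK : (2*n+5) % 8 = 7) (heq : 4*(2*n+5) = x^2+3*y^2+16*z^2)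
    (hx : x % 2 = 1) (hy : y % 2 = 1) (hz : z % 2 = 1) (hxy : x % 4 = y % 4) :
    2*n+5 = (2*z)^2 + 3*((x-y)/4)^2 + 16*((x+3*y)/16)^2 := by
  have hd16 : 16 ∣ x + 3*y := key1 hx hz hK hxy heq
  obtain ⟨C, hC⟩ := hd16
  have hd4 : (4:ℤ) ∣ x - y := by omega
  obtain ⟨B, hB⟩ := hd4
  rw [show (x-y)/4 = B by omega, show (x+3*y)/16 = C by omega]
  rw [show x = 3*B+4*C by omega, show y = 4*C-B by omega] at heq
  linarith [heq]

lemma memA2 {n x y z : ℤ} (hK : (2*n+5) % 8 = 7) (heq : 4*(2*n+5) = x^2+3*y^2+16*z^2)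
    (hx : x % 2 = 1) (hy : y % 2 = 1) (hz : z % 2 = 1) (hxy : ¬ x % 4 = y % 4) :
    2*n+5 = (2*z)^2 + 3*((x+y)/4)^2 + 16*((x-3*y)/16)^2 := by
  have heq2 : 4*(2*n+5) = x^2+3*(-y)^2+16*z^2 := by linear_combination heq
  have h := memA1 hK heq2 hx (by omega) hz (by omega)
  rw [show x - -y = x + y by ring, show x + 3*(-y) = x - 3*y by ring] at h
  exact h

/-- backward membership for the first main equiv -/
lemma memB1 {n a b c : ℤ} (hK : (2*n+5) % 8 = 7) (h : 2*n+5 = a^2+3*b^2+16*c^2) :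
    4*(2*n+5) = (3*b+4*c)^2+3*(4*c-b)^2+16*(a/2)^2 ∧
      (3*b+4*c) % 2 = 1 ∧ (4*c-b) % 2 = 1 ∧ (a/2) % 2 = 1 := by
  obtain ⟨ha, hb⟩ := key2 hK h
  obtain ⟨w, hw⟩ : ∃ w, a = 2*w := ⟨a/2, by omega⟩
  refine ⟨?_, by omega, by omega, by omega⟩
  rw [show a/2 = w by omega]
  rw [hw] at h
  linarith [h]

lemma memB2 {n a b c : ℤ} (hK : (2*n+5) % 8 = 7) (h : 2*n+5 = a^2+3*b^2+16*c^2) :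
    4*(2*n+5) = (3*b+4*c)^2+3*(b-4*c)^2+16*(a/2)^2 ∧
      (3*b+4*c) % 2 = 1 ∧ (b-4*c) % 2 = 1 ∧ (a/2) % 2 = 1 := by
  obtain ⟨e1, e2, e3, e4⟩ := memB1 hK h
  exact ⟨by linear_combination e1, e2, by omega, e4⟩

/-- forward membership for the second main equiv -/
lemma memC1 {n s t r : ℤ} (heq : 2*n+5 = 2*s^2+2*t^2+3*r^2) (hst : s % 4 = t % 4) :
    2*n+5 = (s+t)^2 + 3*r^2 + 16*((s-t)/4)^2 := by
  have hd4 : (4:ℤ) ∣ s - t := by omega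
  obtain ⟨C, hC⟩ := hd4
  rw [show (s-t)/4 = C by omega, show s = t+4*C by omega]
  rw [show s = t+4*C by omega] at heq
  linarith [heq]

lemma memC2 {n s t r : ℤ} (heq : 2*n+5 = 2*s^2+2*t^2+3*r^2)
    (hs : s % 2 = 1) (ht : t % 2 = 1) (hst : ¬ s % 4 = t % 4) :
    2*n+5 = (s-t)^2 + 3*r^2 + 16*((s+t)/4)^2 := by
  have heq2 : 2*n+5 = 2*s^2+2*(-t)^2+3*r^2 := by linear_combination heq
  have h := memC1 heq2 (by omega)
  rw [show s + -t = s - t by ring, show s - -t = s + t by ring] at h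
  exact h

/-- backward membership for the second main equiv -/
lemma memD1 {n a b c : ℤ} (hK : (2*n+5) % 8 = 7) (h : 2*n+5 = a^2+3*b^2+16*c^2) :
    2*n+5 = 2*(a/2+2*c)^2+2*(a/2-2*c)^2+3*b^2 ∧
      (a/2+2*c) % 2 = 1 ∧ (a/2-2*c) % 2 = 1 ∧ b % 2 = 1 := by
  obtain ⟨ha, hb⟩ := key2 hK h
  obtain ⟨w, hw⟩ : ∃ w, a = 2*w := ⟨a/2, by omega⟩
  refine ⟨?_, by omega, by omega, hb⟩
  rw [show a/2 = w by omega]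
  rw [hw] at h
  linarith [h]

lemma memD2 {n a b c : ℤ} (hK : (2*n+5) % 8 = 7) (h : 2*n+5 = a^2+3*b^2+16*c^2) :
    2*n+5 = 2*(a/2+2*c)^2+2*(2*c-a/2)^2+3*b^2 ∧
      (a/2+2*c) % 2 = 1 ∧ (2*c-a/2) % 2 = 1 ∧ b % 2 = 1 := by
  obtain ⟨e1, e2, e3, e4⟩ := memD1 hK h
  exact ⟨by linear_combination e1, e2, by omega, e4⟩

set_option maxHeartbeats 1000000 in
theorem stmt14 (n : ℕ) (hn : 0 < n) (h : n % 4 = 1) :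
    t 1 3 16 n = t 2 2 3 ((n - 1) / 4) ∧ t 1 3 16 n = 2 * N 1 3 16 (2 * n + 5) := by
  obtain ⟨m, hmn⟩ : ∃ m : ℕ, n = 4*m+1 := ⟨(n-1)/4, by omega⟩
  rw [show (n-1)/4 = m by omega]
  have hKmod : (2*(n:ℤ)+5) % 8 = 7 := by omega
  have hm : (n:ℤ) = 4*(m:ℤ) + 1 := by omega
  have hA : t 1 3 16 n = Nat.card {p : ℤ×ℤ×ℤ //
      4*(2*(n:ℤ)+5) = p.1^2+3*p.2.1^2+16*p.2.2^2 ∧ p.1 % 2 = 1 ∧ p.2.1 % 2 = 1 ∧ p.2.2 % 2 = 1} := by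
    unfold t
    refine Nat.card_congr ?_
    refine
      { toFun := fun p => ⟨(2*p.1.1+1, 2*p.1.2.1+1, 2*p.1.2.2+1), ?_⟩
        invFun := fun q => ⟨((q.1.1-1)/2, (q.1.2.1-1)/2, (q.1.2.2-1)/2), ?_⟩
        left_inv := ?_
        right_inv := ?_ }
    · have hp := p.2
      push_cast at hp
      dsimp only
      refine ⟨?_, by omega, by omega, by omega⟩
      linarith [tri_sq p.1.1, tri_sq p.1.2.1, tri_sq p.1.2.2, hp]
    · obtain ⟨heq, hx, hy, hz⟩ := q.2
      dsimp only
      have ex : q.1.1^2 = 8*tri ((q.1.1-1)/2) + 1 := by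
        have h2 : q.1.1 = 2*((q.1.1-1)/2)+1 := by omega
        calc q.1.1^2 = (2*((q.1.1-1)/2)+1)^2 := by rw [← h2]
        _ = 8*tri ((q.1.1-1)/2) + 1 := tri_sq _
      have ey : q.1.2.1^2 = 8*tri ((q.1.2.1-1)/2) + 1 := by
        have h2 : q.1.2.1 = 2*((q.1.2.1-1)/2)+1 := by omega
        calc q.1.2.1^2 = (2*((q.1.2.1-1)/2)+1)^2 := by rw [← h2]
        _ = 8*tri ((q.1.2.1-1)/2) + 1 := tri_sq _
      have ez : q.1.2.2^2 = 8*tri ((q.1.2.2-1)/2) + 1 := by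
        have h2 : q.1.2.2 = 2*((q.1.2.2-1)/2)+1 := by omega
        calc q.1.2.2^2 = (2*((q.1.2.2-1)/2)+1)^2 := by rw [← h2]
        _ = 8*tri ((q.1.2.2-1)/2) + 1 := tri_sq _
      push_cast
      linarith [heq, ex, ey, ez]
    · rintro ⟨⟨X,Y,Z⟩, hp⟩
      apply Subtype.ext
      simp only [Prod.mk.injEq, and_true, true_and]
      omega
    · rintro ⟨⟨x,y,z⟩, heq, hx, hy, hz⟩
      dsimp only at heq hx hy hz
      apply Subtype.ext
      simp only [Prod.mk.injEq, and_true, true_and]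
      omega
  have hC : t 2 2 3 m = Nat.card {p : ℤ×ℤ×ℤ //
      2*(n:ℤ)+5 = 2*p.1^2+2*p.2.1^2+3*p.2.2^2 ∧ p.1 % 2 = 1 ∧ p.2.1 % 2 = 1 ∧ p.2.2 % 2 = 1} := by
    unfold t
    refine Nat.card_congr ?_
    refine
      { toFun := fun p => ⟨(2*p.1.1+1, 2*p.1.2.1+1, 2*p.1.2.2+1), ?_⟩
        invFun := fun q => ⟨((q.1.1-1)/2, (q.1.2.1-1)/2, (q.1.2.2-1)/2), ?_⟩
        left_inv := ?_
        right_inv := ?_ }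
    · have hp := p.2
      push_cast at hp
      dsimp only
      refine ⟨?_, by omega, by omega, by omega⟩
      linarith [tri_sq p.1.1, tri_sq p.1.2.1, tri_sq p.1.2.2, hp, hm]
    · obtain ⟨heq, hx, hy, hz⟩ := q.2
      dsimp only
      have ex : q.1.1^2 = 8*tri ((q.1.1-1)/2) + 1 := by
        have h2 : q.1.1 = 2*((q.1.1-1)/2)+1 := by omega
        calc q.1.1^2 = (2*((q.1.1-1)/2)+1)^2 := by rw [← h2]
        _ = 8*tri ((q.1.1-1)/2) + 1 := tri_sq _
      have ey : q.1.2.1^2 = 8*tri ((q.1.2.1-1)/2) + 1 := by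
        have h2 : q.1.2.1 = 2*((q.1.2.1-1)/2)+1 := by omega
        calc q.1.2.1^2 = (2*((q.1.2.1-1)/2)+1)^2 := by rw [← h2]
        _ = 8*tri ((q.1.2.1-1)/2) + 1 := tri_sq _
      have ez : q.1.2.2^2 = 8*tri ((q.1.2.2-1)/2) + 1 := by
        have h2 : q.1.2.2 = 2*((q.1.2.2-1)/2)+1 := by omega
        calc q.1.2.2^2 = (2*((q.1.2.2-1)/2)+1)^2 := by rw [← h2]
        _ = 8*tri ((q.1.2.2-1)/2) + 1 := tri_sq _
      push_cast
      linarith [heq, ex, ey, ez, hm]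
    · rintro ⟨⟨X,Y,Z⟩, hp⟩
      apply Subtype.ext
      simp only [Prod.mk.injEq, and_true, true_and]
      omega
    · rintro ⟨⟨x,y,z⟩, heq, hx, hy, hz⟩
      dsimp only at heq hx hy hz
      apply Subtype.ext
      simp only [Prod.mk.injEq, and_true, true_and]
      omega
  have hB : N 1 3 16 (2*n+5) = Nat.card {p : ℤ×ℤ×ℤ //
      2*(n:ℤ)+5 = p.1^2+3*p.2.1^2+16*p.2.2^2} := by
    unfold N
    refine Nat.card_congr (Equiv.subtypeEquivRight fun p => ?_)
    constructor <;> intro hh <;> push_cast at hh ⊢ <;> linarith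
  have e3 : Nat.card {p : ℤ×ℤ×ℤ //
      4*(2*(n:ℤ)+5) = p.1^2+3*p.2.1^2+16*p.2.2^2 ∧ p.1 % 2 = 1 ∧ p.2.1 % 2 = 1 ∧ p.2.2 % 2 = 1}
      = Nat.card (Bool × {p : ℤ×ℤ×ℤ // 2*(n:ℤ)+5 = p.1^2+3*p.2.1^2+16*p.2.2^2}) := by
    refine Nat.card_congr ?_
    refine
      { toFun := fun p =>
          if hxy : p.1.1 % 4 = p.1.2.1 % 4 then
            (true, ⟨(2*p.1.2.2, (p.1.1 - p.1.2.1)/4, (p.1.1 + 3*p.1.2.1)/16),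
              memA1 hKmod p.2.1 p.2.2.1 p.2.2.2.1 p.2.2.2.2 hxy⟩)
          else
            (false, ⟨(2*p.1.2.2, (p.1.1 + p.1.2.1)/4, (p.1.1 - 3*p.1.2.1)/16),
              memA2 hKmod p.2.1 p.2.2.1 p.2.2.2.1 p.2.2.2.2 hxy⟩)
        invFun := fun q =>
          cond q.1
            ⟨(3*q.2.1.2.1 + 4*q.2.1.2.2, 4*q.2.1.2.2 - q.2.1.2.1, q.2.1.1/2),
              memB1 hKmod q.2.2⟩
            ⟨(3*q.2.1.2.1 + 4*q.2.1.2.2, q.2.1.2.1 - 4*q.2.1.2.2, q.2.1.1/2),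
              memB2 hKmod q.2.2⟩
        left_inv := ?_
        right_inv := ?_ }
    · rintro ⟨⟨x,y,z⟩, heq, hx, hy, hz⟩
      dsimp only at heq hx hy hz
      by_cases hxy : x % 4 = y % 4
      · have hd16 : 16 ∣ x + 3*y := key1 hx hz hKmod hxy heq
        simp only [dif_pos hxy, Bool.cond_true, Bool.cond_false]
        apply Subtype.ext
        simp only [Prod.mk.injEq, and_true, true_and]
        omega
      · have hy2 : (-y) % 2 = 1 := by omega
        have hxy2 : x % 4 = (-y) % 4 := by omega
        have heq2 : 4*(2*(n:ℤ)+5) = x^2+3*(-y)^2+16*z^2 := by linear_combination heq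
        have hd16 : 16 ∣ x + 3*(-y) := key1 hx hz hKmod hxy2 heq2
        simp only [dif_neg hxy, Bool.cond_true, Bool.cond_false]
        apply Subtype.ext
        simp only [Prod.mk.injEq, and_true, true_and]
        omega
    · rintro ⟨b, ⟨⟨a,bb,c⟩, hh⟩⟩
      dsimp only at hh
      obtain ⟨ha, hb⟩ := key2 hKmod hh
      cases b
      · have hcond : ¬((3*bb+4*c) % 4 = (bb-4*c) % 4) := by omega
        simp only [Bool.cond_true, Bool.cond_false, dif_neg hcond]
        refine Prod.ext rfl (Subtype.ext ?_)
        simp only [Prod.mk.injEq, and_true, true_and]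
        omega
      · have hcond : (3*bb+4*c) % 4 = (4*c-bb) % 4 := by omega
        simp only [Bool.cond_true, Bool.cond_false, dif_pos hcond]
        refine Prod.ext rfl (Subtype.ext ?_)
        simp only [Prod.mk.injEq, and_true, true_and]
        omega
  have e4 : Nat.card {p : ℤ×ℤ×ℤ //
      2*(n:ℤ)+5 = 2*p.1^2+2*p.2.1^2+3*p.2.2^2 ∧ p.1 % 2 = 1 ∧ p.2.1 % 2 = 1 ∧ p.2.2 % 2 = 1}
      = Nat.card (Bool × {p : ℤ×ℤ×ℤ // 2*(n:ℤ)+5 = p.1^2+3*p.2.1^2+16*p.2.2^2}) := by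
    refine Nat.card_congr ?_
    refine
      { toFun := fun p =>
          if hst : p.1.1 % 4 = p.1.2.1 % 4 then
            (true, ⟨(p.1.1 + p.1.2.1, p.1.2.2, (p.1.1 - p.1.2.1)/4),
              memC1 p.2.1 hst⟩)
          else
            (false, ⟨(p.1.1 - p.1.2.1, p.1.2.2, (p.1.1 + p.1.2.1)/4),
              memC2 p.2.1 p.2.2.1 p.2.2.2.1 hst⟩)
        invFun := fun q =>
          cond q.1
            ⟨(q.2.1.1/2 + 2*q.2.1.2.2, q.2.1.1/2 - 2*q.2.1.2.2, q.2.1.2.1),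
              memD1 hKmod q.2.2⟩
            ⟨(q.2.1.1/2 + 2*q.2.1.2.2, 2*q.2.1.2.2 - q.2.1.1/2, q.2.1.2.1),
              memD2 hKmod q.2.2⟩
        left_inv := ?_
        right_inv := ?_ }
    · rintro ⟨⟨s,tt,r⟩, heq, hs, ht, hr⟩
      dsimp only at heq hs ht hr
      by_cases hst : s % 4 = tt % 4
      · simp only [dif_pos hst, Bool.cond_true, Bool.cond_false]
        apply Subtype.ext
        simp only [Prod.mk.injEq, and_true, true_and]
        omega
      · simp only [dif_neg hst, Bool.cond_true, Bool.cond_false]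
        apply Subtype.ext
        simp only [Prod.mk.injEq, and_true, true_and]
        omega
    · rintro ⟨b, ⟨⟨a,bb,c⟩, hh⟩⟩
      dsimp only at hh
      obtain ⟨ha, hb⟩ := key2 hKmod hh
      cases b
      · have hcond : ¬((a/2 + 2*c) % 4 = (2*c - a/2) % 4) := by omega
        simp only [Bool.cond_true, Bool.cond_false, dif_neg hcond]
        refine Prod.ext rfl (Subtype.ext ?_)
        simp only [Prod.mk.injEq, and_true, true_and]
        omega
      · have hcond : (a/2 + 2*c) % 4 = (a/2 - 2*c) % 4 := by omega
        simp only [Bool.cond_true, Bool.cond_false, dif_pos hcond]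
        refine Prod.ext rfl (Subtype.ext ?_)
        simp only [Prod.mk.injEq, and_true, true_and]
        omega
  have hbool : Nat.card (Bool × {p : ℤ×ℤ×ℤ // 2*(n:ℤ)+5 = p.1^2+3*p.2.1^2+16*p.2.2^2})
      = 2 * Nat.card {p : ℤ×ℤ×ℤ // 2*(n:ℤ)+5 = p.1^2+3*p.2.1^2+16*p.2.2^2} := by
    rw [Nat.card_prod]
    simp [Nat.card_eq_fintype_card]
  constructor
  · rw [hA, hC, e3, e4]
  · rw [hA, hB, e3, hbool]
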